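/- Let S ∈ ℝ^{n̂×n̂} be invertible and set Ã = SÂS⁻¹, X̃₀ = SX̂₀, C̃ = ĈS⁻¹, Ñ_i = SN̂_iS⁻¹. Let X : [0,T] → ℝ^{n×n̂} and Y : [0,T] → ℝ^{n×n̂} be the unique solutions of X'(t) = AX(t) + X(t)Ãᵀ + Σ_{i,j=1}^q N_i X(t) Ñ_jᵀ k_{ij}, X(0) = X₀X̃₀ᵀ, and Y'(t) = AᵀY(t) + Y(t)Ã + Σ_{i,j=1}^q N_iᵀ Y(t) Ñ_j k_{ij}, Y(0) = CᵀC̃. Suppose V = (∫₀ᵀ X(t)dt) M_V and W = (∫₀ᵀ Y(t)dt) M_W for invertible M_V, M_W ∈ ℝ^{n̂×n̂}, that WᵀV is invertible, that the reduced matrices satisfy the fixed-point (projection) relations Â = (WᵀV)⁻¹WᵀAV, N̂_i = (WᵀV)⁻¹WᵀN_iV, X̂₀ = (WᵀV)⁻¹WᵀX₀, Ĉ = CV, and that L̂ is invertible. Then: (i) V P̂(T) − P̃(T) = V · L̂⁻¹[ F̂(T) − (WᵀV)⁻¹Wᵀ F̃(T) ]; (ii) W(VᵀW)⁻¹ Q̂(T)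 − Q̃(T) = W(VᵀW)⁻¹ · (L̂*)⁻¹[ Ĝ(T) − Vᵀ G̃(T) ]. -/

import Mathlib

open Matrix MeasureTheory Filter
open scoped Kronecker Topology

/-- Column-stacking vectorization of a matrix: `vecM X (j, i) = X i j`. -/
def vecM {a b : Type*} (X : Matrix a b ℝ) : b × a → ℝ := fun p => X p.2 p.1

/-- Inverse of column-stacking vectorization. -/
def unvecM {a b : Type*} (v : b × a → ℝ) : Matrix a b ℝ := Matrix.of fun i j => v (j, i)

/-- (Mixed) Lyapunov-type operator `X ↦ A₁ X + X A₂ᵀ + ∑ᵢⱼ kᵢⱼ • N₁ᵢ X N₂ⱼᵀ`. -/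
def lyapM {a b : Type*} [Fintype a] [Fintype b] {q : ℕ}
    (A₁ : Matrix a a ℝ) (A₂ : Matrix b b ℝ)
    (N₁ : Fin q → Matrix a a ℝ) (N₂ : Fin q → Matrix b b ℝ)
    (K : Matrix (Fin q) (Fin q) ℝ) (X : Matrix a b ℝ) : Matrix a b ℝ :=
  A₁ * X + X * A₂ᵀ + ∑ i, ∑ j, K i j • (N₁ i * X * (N₂ j)ᵀ)

/-- Frobenius adjoint of `lyapM`: `X ↦ A₁ᵀ X + X A₂ + ∑ᵢⱼ kᵢⱼ • N₁ᵢᵀ X N₂ⱼ`. -/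
def lyapAdjM {a b : Type*} [Fintype a] [Fintype b] {q : ℕ}
    (A₁ : Matrix a a ℝ) (A₂ : Matrix b b ℝ)
    (N₁ : Fin q → Matrix a a ℝ) (N₂ : Fin q → Matrix b b ℝ)
    (K : Matrix (Fin q) (Fin q) ℝ) (X : Matrix a b ℝ) : Matrix a b ℝ :=
  A₁ᵀ * X + X * A₂ + ∑ i, ∑ j, K i j • ((N₁ i)ᵀ * X * N₂ j)

/-- Kronecker matrix `𝒦 = I ⊗ A₁ + A₂ ⊗ I + ∑ᵢⱼ kᵢⱼ • (N₂ᵢ ⊗ N₁ⱼ)` associated to `lyapM`. -/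
noncomputable def kronM {a b : Type*} [Fintype a] [Fintype b] [DecidableEq a] [DecidableEq b] {q : ℕ}
    (A₁ : Matrix a a ℝ) (A₂ : Matrix b b ℝ)
    (N₁ : Fin q → Matrix a a ℝ) (N₂ : Fin q → Matrix b b ℝ)
    (K : Matrix (Fin q) (Fin q) ℝ) : Matrix (b × a) (b × a) ℝ :=
  (1 : Matrix b b ℝ) ⊗ₖ A₁ + A₂ ⊗ₖ (1 : Matrix a a ℝ) + ∑ i, ∑ j, K i j • (N₂ i ⊗ₖ N₁ j)

/-- `F` solves the matrix ODE `F' = L (F t)` at every `t ∈ [0,T]` (entrywise). -/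
def solvesODE {a b : Type*} (L : Matrix a b ℝ → Matrix a b ℝ)
    (F : ℝ → Matrix a b ℝ) (T : ℝ) : Prop :=
  ∀ t ∈ Set.Icc (0:ℝ) T, ∀ i j, HasDerivAt (fun s => F s i j) (L (F t) i j) t

/-- Entrywise integral `∫₀ᵀ F(t) dt`. -/
noncomputable def intM {a b : Type*} (F : ℝ → Matrix a b ℝ) (T : ℝ) : Matrix a b ℝ :=
  Matrix.of fun i j => ∫ t in (0:ℝ)..T, F t i j

/-- Explicit solution of a vectorized linear matrix ODE via the matrix exponential. -/
noncomputable def expSolM {a b : Type*} [Fintype a] [Fintype b] [DecidableEq a] [DecidableEq b]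
    (Kmat : Matrix (b × a) (b × a) ℝ) (F₀ : Matrix a b ℝ) (t : ℝ) : Matrix a b ℝ :=
  unvecM (NormedSpace.exp (t • Kmat) *ᵥ vecM F₀)

/-!
Integrating `F' = 𝓛 F` over `[0, T]` gives `𝓛 (∫₀ᵀ F) = F T - F 0`, and vectorization turns `𝓛`
into the Kronecker matrix, so `𝓛̂⁻¹` is `kronM⁻¹` acting on `vecM`. By uniqueness of solutions,
`X = F̃ Sᵀ`, so `V = P̃ M` with `M` invertible. With `Π = (WᵀV)⁻¹Wᵀ` we have `Π V = 1`, and the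
fixed-point relations give `Π 𝓛̃ (V Z) = 𝓛̂ Z`. Hence `𝓛̂ M⁻¹ = Π (F̃ T - F̃ 0) = Π F̃ T - F̂ 0`, so
`𝓛̂ (P̂ - M⁻¹) = F̂ T - Π F̃ T`, and `V P̂ - P̃ = V (P̂ - M⁻¹)`. Part (ii) is the same argument for
the transposed data, with `W (VᵀW)⁻¹` in place of `V` and `Vᵀ` in place of `Π`.
-/

section LinearODE

variable {E : Type*} [NormedAddCommGroup E] [NormedSpace ℝ E] {L : E →L[ℝ] E} {u w : ℝ → E}
  {T : ℝ}

theorem ContinuousLinearMap.map_intervalIntegral_eq_sub_of_hasDerivAt [CompleteSpace E]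
    (hT : 0 ≤ T) (hu : ∀ t ∈ Set.Icc 0 T, HasDerivAt u (L (u t)) t) :
    L (∫ t in (0:ℝ)..T, u t) = u T - u 0 := by
  have hcont : ContinuousOn u (Set.Icc 0 T) := fun t ht =>
    (hu t ht).continuousAt.continuousWithinAt
  rw [← L.intervalIntegral_comp_comm (hcont.intervalIntegrable_of_Icc hT)]
  refine intervalIntegral.integral_eq_sub_of_hasDerivAt (fun t ht => hu t ?_)
    ((L.continuous.comp_continuousOn hcont).intervalIntegrable_of_Icc hT)
  rwa [Set.uIcc_of_le hT] at ht

theorem ODE_solution_unique_of_linear (hu : ∀ t ∈ Set.Icc 0 T, HasDerivAt u (L (u t)) t)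
    (hw : ∀ t ∈ Set.Icc 0 T, HasDerivAt w (L (w t)) t) (h0 : u 0 = w 0) :
    Set.EqOn u w (Set.Icc 0 T) :=
  ODE_solution_unique (v := fun _ => L) (fun _ => L.lipschitz)
    (fun t ht => (hu t ht).continuousAt.continuousWithinAt)
    (fun t ht => (hu t (Set.Ico_subset_Icc_self ht)).hasDerivWithinAt)
    (fun t ht => (hw t ht).continuousAt.continuousWithinAt)
    (fun t ht => (hw t (Set.Ico_subset_Icc_self ht)).hasDerivWithinAt) h0

end LinearODE

section Vectorization

variable {a b : Type*}

@[simp]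
theorem unvecM_vecM (X : Matrix a b ℝ) : unvecM (vecM X) = X := rfl

variable [Fintype a] [Fintype b] {q : ℕ} (A₁ : Matrix a a ℝ) (A₂ : Matrix b b ℝ)
  (N₁ : Fin q → Matrix a a ℝ) (N₂ : Fin q → Matrix b b ℝ) {K : Matrix (Fin q) (Fin q) ℝ}

theorem lyapAdjM_eq_lyapM_transpose :
    lyapAdjM A₁ A₂ N₁ N₂ K = lyapM A₁ᵀ A₂ᵀ (fun i => (N₁ i)ᵀ) (fun i => (N₂ i)ᵀ) K := by
  funext X
  simp only [lyapAdjM, lyapM, transpose_transpose]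

theorem kronecker_mulVec_vecM (M₂ : Matrix b b ℝ) (M₁ : Matrix a a ℝ) (X : Matrix a b ℝ) :
    (M₂ ⊗ₖ M₁) *ᵥ vecM X = vecM (M₁ * X * M₂ᵀ) := by
  ext ⟨c, r⟩
  simp only [mulVec, dotProduct, vecM, Fintype.sum_prod_type, kroneckerMap_apply, mul_apply,
    transpose_apply, Finset.sum_mul]
  exact Finset.sum_congr rfl fun _ _ => Finset.sum_congr rfl fun _ _ => by ring

theorem lyapM_sub (X Y : Matrix a b ℝ) :
    lyapM A₁ A₂ N₁ N₂ K (X - Y) = lyapM A₁ A₂ N₁ N₂ K X - lyapM A₁ A₂ N₁ N₂ K Y := by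
  simp only [lyapM, Matrix.mul_sub, Matrix.sub_mul, smul_sub, Finset.sum_sub_distrib]
  abel

variable [DecidableEq a] [DecidableEq b]

theorem kronM_mulVec_vecM (hK : K.IsSymm) (X : Matrix a b ℝ) :
    kronM A₁ A₂ N₁ N₂ K *ᵥ vecM X = vecM (lyapM A₁ A₂ N₁ N₂ K X) := by
  ext ⟨c, r⟩
  simp only [kronM, lyapM, add_mulVec, sum_mulVec, smul_mulVec, kronecker_mulVec_vecM,
    transpose_one, Matrix.mul_one, Matrix.one_mul]
  simp only [vecM, Pi.add_apply, Finset.sum_apply, Pi.smul_apply, Matrix.add_apply,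
    Matrix.sum_apply, Matrix.smul_apply]
  rw [Finset.sum_comm]
  simp only [hK.apply]

theorem kronM_transpose :
    (kronM A₁ A₂ N₁ N₂ K)ᵀ = kronM A₁ᵀ A₂ᵀ (fun i => (N₁ i)ᵀ) (fun i => (N₂ i)ᵀ) K := by
  simp only [kronM, transpose_add, transpose_sum, transpose_smul, ← kroneckerMap_transpose,
    transpose_one]

theorem unvecM_inv_kronM_mulVec_lyapM (hK : K.IsSymm) (hL : IsUnit (kronM A₁ A₂ N₁ N₂ K))
    (X : Matrix a b ℝ) :
    unvecM ((kronM A₁ A₂ N₁ N₂ K)⁻¹ *ᵥ vecM (lyapM A₁ A₂ N₁ N₂ K X)) = X := by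
  rw [← kronM_mulVec_vecM _ _ _ _ hK, mulVec_mulVec,
    nonsing_inv_mul _ ((isUnit_iff_isUnit_det _).mp hL), one_mulVec, unvecM_vecM]

end Vectorization

section MatrixODE

variable {a b : Type*} {F G : ℝ → Matrix a b ℝ} {T : ℝ}

theorem solvesODE.continuousOn_apply {L : Matrix a b ℝ → Matrix a b ℝ} (hF : solvesODE L F T)
    (i : a) (j : b) : ContinuousOn (fun t => F t i j) (Set.Icc 0 T) :=
  fun t ht => (hF t ht i j).continuousAt.continuousWithinAt

theorem intM_congr (hT : 0 ≤ T) (h : Set.EqOn F G (Set.Icc 0 T)) : intM F T = intM G T := by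
  ext i j
  refine intervalIntegral.integral_congr fun t ht => ?_
  rw [Set.uIcc_of_le hT] at ht
  rw [h ht]

variable [Fintype b]

theorem solvesODE.mul_right {L₁ L₂ : Matrix a b ℝ → Matrix a b ℝ} (M : Matrix b b ℝ)
    (hL : ∀ Z, L₂ (Z * M) = L₁ Z * M) (hF : solvesODE L₁ F T) :
    solvesODE L₂ (fun t => F t * M) T := by
  intro t ht i j
  simp only [hL, mul_apply]
  exact HasDerivAt.fun_sum fun k _ => (hF t ht i k).mul_const _

theorem intM_mul_right (hT : 0 ≤ T)
    (hF : ∀ i j, ContinuousOn (fun t => F t i j) (Set.Icc 0 T)) (M : Matrix b b ℝ) :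
    intM (fun t => F t * M) T = intM F T * M := by
  ext i j
  simp only [intM, of_apply, mul_apply]
  rw [intervalIntegral.integral_finsetSum fun k _ =>
    ((hF i k).intervalIntegrable_of_Icc hT).mul_const _]
  simp only [intervalIntegral.integral_mul_const]

variable [Fintype a]

theorem vecM_intM (hT : 0 ≤ T) (hF : ∀ i j, ContinuousOn (fun t => F t i j) (Set.Icc 0 T)) :
    vecM (intM F T) = ∫ t in (0:ℝ)..T, vecM (F t) := by
  have hint : IntervalIntegrable (fun t => vecM (F t)) volume 0 T :=
    (continuousOn_pi.2 fun p : b × a => hF p.2 p.1).intervalIntegrable_of_Icc hT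
  ext p
  exact (ContinuousLinearMap.proj (R := ℝ) (φ := fun _ : b × a => ℝ) p).intervalIntegral_comp_comm
    hint

variable [DecidableEq a] [DecidableEq b] {q : ℕ} {A₁ : Matrix a a ℝ} {A₂ : Matrix b b ℝ}
  {N₁ : Fin q → Matrix a a ℝ} {N₂ : Fin q → Matrix b b ℝ} {K : Matrix (Fin q) (Fin q) ℝ}

theorem solvesODE.hasDerivAt_vecM (hK : K.IsSymm)
    (hF : solvesODE (lyapM A₁ A₂ N₁ N₂ K) F T) :
    ∀ t ∈ Set.Icc 0 T, HasDerivAt (fun s => vecM (F s))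
      ((kronM A₁ A₂ N₁ N₂ K).mulVecLin.toContinuousLinearMap (vecM (F t))) t := by
  intro t ht
  rw [LinearMap.coe_toContinuousLinearMap', mulVecLin_apply, kronM_mulVec_vecM _ _ _ _ hK]
  exact hasDerivAt_pi.2 fun p => hF t ht p.2 p.1

theorem solvesODE.lyapM_intM (hK : K.IsSymm) (hT : 0 ≤ T)
    (hF : solvesODE (lyapM A₁ A₂ N₁ N₂ K) F T) :
    lyapM A₁ A₂ N₁ N₂ K (intM F T) = F T - F 0 := by
  rw [← unvecM_vecM (lyapM _ _ _ _ _ _), ← kronM_mulVec_vecM _ _ _ _ hK,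
    vecM_intM hT hF.continuousOn_apply, ← mulVecLin_apply,
    ← LinearMap.coe_toContinuousLinearMap',
    ContinuousLinearMap.map_intervalIntegral_eq_sub_of_hasDerivAt hT (hF.hasDerivAt_vecM hK)]
  rfl

theorem solvesODE.eqOn (hK : K.IsSymm) (hF : solvesODE (lyapM A₁ A₂ N₁ N₂ K) F T)
    (hG : solvesODE (lyapM A₁ A₂ N₁ N₂ K) G T) (h0 : F 0 = G 0) :
    Set.EqOn F G (Set.Icc 0 T) := fun _ ht =>
  congrArg unvecM <| ODE_solution_unique_of_linear (hF.hasDerivAt_vecM hK)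
    (hG.hasDerivAt_vecM hK) (congrArg vecM h0) ht

end MatrixODE

section Reduction

variable {a b : Type*} [Fintype a] [Fintype b] [DecidableEq b] {q : ℕ} {A : Matrix a a ℝ}
  {N : Fin q → Matrix a a ℝ} {K : Matrix (Fin q) (Fin q) ℝ} {Ahat : Matrix b b ℝ}
  {Nhat : Fin q → Matrix b b ℝ} {T : ℝ}

theorem lyapM_conj_mul_transpose {U Ui : Matrix b b ℝ} (hU : Ui * U = 1) (Z : Matrix a b ℝ) :
    lyapM A (U * Ahat * Ui) N (fun i => U * Nhat i * Ui) K (Z * Uᵀ) =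
      lyapM A Ahat N Nhat K Z * Uᵀ := by
  have hUt : Uᵀ * Uiᵀ = 1 := by rw [← transpose_mul, hU, transpose_one]
  have hconj (M : Matrix b b ℝ) (Y : Matrix a b ℝ) :
      Y * Uᵀ * (U * M * Ui)ᵀ = Y * Mᵀ * Uᵀ := by
    rw [transpose_mul, transpose_mul, Matrix.mul_assoc Y, ← Matrix.mul_assoc Uᵀ, hUt,
      Matrix.one_mul, Matrix.mul_assoc]
  simp only [lyapM, Matrix.add_mul, Matrix.sum_mul, Matrix.smul_mul, ← Matrix.mul_assoc, hconj]

variable [DecidableEq a]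

theorem intM_eq_intM_mul_transpose_of_conj (hK : K.IsSymm) (hT : 0 ≤ T)
    {U Ui : Matrix b b ℝ} (hU : Ui * U = 1) {X F : ℝ → Matrix a b ℝ}
    (hX : solvesODE (lyapM A (U * Ahat * Ui) N (fun i => U * Nhat i * Ui) K) X T)
    (hF : solvesODE (lyapM A Ahat N Nhat K) F T) (h0 : X 0 = F 0 * Uᵀ) :
    intM X T = intM F T * Uᵀ := by
  have hFU := hF.mul_right Uᵀ (lyapM_conj_mul_transpose hU)
  rw [intM_congr hT (hX.eqOn hK hFU h0), intM_mul_right hT hF.continuousOn_apply]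

theorem galerkin_intM_error (hK : K.IsSymm) (hT : 0 ≤ T) {V : Matrix a b ℝ}
    {P : Matrix b a ℝ} (hPV : P * V = 1) (hAhat : Ahat = P * A * V)
    (hNhat : ∀ i, Nhat i = P * N i * V) (hL : IsUnit (kronM Ahat Ahat Nhat Nhat K))
    {Fhat : ℝ → Matrix b b ℝ} {Ftil : ℝ → Matrix a b ℝ}
    (hFhat : solvesODE (lyapM Ahat Ahat Nhat Nhat K) Fhat T)
    (hFtil : solvesODE (lyapM A Ahat N Nhat K) Ftil T) (h0 : Fhat 0 = P * Ftil 0)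
    {M : Matrix b b ℝ} (hM : IsUnit M) (hV : V = intM Ftil T * M) :
    V * intM Fhat T - intM Ftil T =
      V * unvecM ((kronM Ahat Ahat Nhat Nhat K)⁻¹ *ᵥ vecM (Fhat T - P * Ftil T)) := by
  have hVM : V * M⁻¹ = intM Ftil T := by
    rw [hV, mul_nonsing_inv_cancel_right _ _ ((isUnit_iff_isUnit_det M).mp hM)]
  have hproj (Z : Matrix b b ℝ) :
      P * lyapM A Ahat N Nhat K (V * Z) = lyapM Ahat Ahat Nhat Nhat K Z := by
    simp only [lyapM, Matrix.mul_add, Matrix.mul_sum, Matrix.mul_smul, hAhat, hNhat,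
      ← Matrix.mul_assoc, hPV, Matrix.one_mul]
  have hLM : lyapM Ahat Ahat Nhat Nhat K M⁻¹ = P * Ftil T - Fhat 0 := by
    rw [← hproj, hVM, hFtil.lyapM_intM hK hT, Matrix.mul_sub, h0]
  have hLerr : lyapM Ahat Ahat Nhat Nhat K (intM Fhat T - M⁻¹) = Fhat T - P * Ftil T := by
    rw [lyapM_sub _ _ _ _, hFhat.lyapM_intM hK hT, hLM, sub_sub_sub_cancel_right]
  rw [← hLerr, unvecM_inv_kronM_mulVec_lyapM _ _ _ _ hK hL, Matrix.mul_sub, hVM]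

end Reduction

/-- Theorem 3.3: at a converged fixed point of the Sylvester iteration,
the time-averaged covariance errors are controlled by the terminal-time covariance
errors via `𝓛̂⁻¹` (resp. `(𝓛̂*)⁻¹`), here expressed through the inverse of the
Kronecker matrix `𝒦̂` (resp. `𝒦̂ᵀ`). -/
theorem stmt_8 {n nh m p q : ℕ} (T : ℝ) (hT : 0 < T)
    (A : Matrix (Fin n) (Fin n) ℝ) (N : Fin q → Matrix (Fin n) (Fin n) ℝ)
    (K : Matrix (Fin q) (Fin q) ℝ) (hK : K.IsSymm)
    (X₀ : Matrix (Fin n) (Fin m) ℝ) (C : Matrix (Fin p) (Fin n) ℝ)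
    (Ahat : Matrix (Fin nh) (Fin nh) ℝ) (Nhat : Fin q → Matrix (Fin nh) (Fin nh) ℝ)
    (X0hat : Matrix (Fin nh) (Fin m) ℝ) (Chat : Matrix (Fin p) (Fin nh) ℝ)
    (S : Matrix (Fin nh) (Fin nh) ℝ) (hS : IsUnit S)
    (X Y : ℝ → Matrix (Fin n) (Fin nh) ℝ)
    (hX : solvesODE
      (lyapM A (S * Ahat * S⁻¹) N (fun i => S * Nhat i * S⁻¹) K) X T)
    (hX0 : X 0 = X₀ * (S * X0hat)ᵀ)
    (hY : solvesODE
      (lyapAdjM A (S * Ahat * S⁻¹) N (fun i => S * Nhat i * S⁻¹) K) Y T)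
    (hY0 : Y 0 = Cᵀ * (Chat * S⁻¹))
    (V W : Matrix (Fin n) (Fin nh) ℝ)
    (MV MW : Matrix (Fin nh) (Fin nh) ℝ) (hMV : IsUnit MV) (hMW : IsUnit MW)
    (hV : V = intM X T * MV) (hW : W = intM Y T * MW)
    (hWV : IsUnit (Wᵀ * V))
    (hAhat : Ahat = (Wᵀ * V)⁻¹ * Wᵀ * A * V)
    (hNhat : ∀ i, Nhat i = (Wᵀ * V)⁻¹ * Wᵀ * N i * V)
    (hX0hat : X0hat = (Wᵀ * V)⁻¹ * Wᵀ * X₀)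
    (hChat : Chat = C * V)
    (hLhat : IsUnit (kronM Ahat Ahat Nhat Nhat K))
    (Fhat : ℝ → Matrix (Fin nh) (Fin nh) ℝ)
    (hFhat : solvesODE (lyapM Ahat Ahat Nhat Nhat K) Fhat T)
    (hFhat0 : Fhat 0 = X0hat * X0hatᵀ)
    (Ftil : ℝ → Matrix (Fin n) (Fin nh) ℝ)
    (hFtil : solvesODE (lyapM A Ahat N Nhat K) Ftil T)
    (hFtil0 : Ftil 0 = X₀ * X0hatᵀ)
    (Ghat : ℝ → Matrix (Fin nh) (Fin nh) ℝ)
    (hGhat : solvesODE (lyapAdjM Ahat Ahat Nhat Nhat K) Ghat T)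
    (hGhat0 : Ghat 0 = Chatᵀ * Chat)
    (Gtil : ℝ → Matrix (Fin n) (Fin nh) ℝ)
    (hGtil : solvesODE (lyapAdjM A Ahat N Nhat K) Gtil T)
    (hGtil0 : Gtil 0 = Cᵀ * Chat) :
    (V * intM Fhat T - intM Ftil T =
      V * unvecM ((kronM Ahat Ahat Nhat Nhat K)⁻¹ *ᵥ
        vecM (Fhat T - (Wᵀ * V)⁻¹ * Wᵀ * Ftil T)))
    ∧ (W * (Vᵀ * W)⁻¹ * intM Ghat T - intM Gtil T =
        W * (Vᵀ * W)⁻¹ * unvecM (((kronM Ahat Ahat Nhat Nhat K)ᵀ)⁻¹ *ᵥ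
          vecM (Ghat T - Vᵀ * Gtil T))) := by
  have hS' : S⁻¹ * S = 1 := nonsing_inv_mul S ((isUnit_iff_isUnit_det S).mp hS)
  have hVW : Vᵀ * W = (Wᵀ * V)ᵀ := by rw [transpose_mul, transpose_transpose]
  have hVWunit : IsUnit (Vᵀ * W) := hVW ▸ (isUnit_transpose _).mpr hWV
  have hWVt : ((Wᵀ * V)⁻¹ * Wᵀ)ᵀ = W * (Vᵀ * W)⁻¹ := by
    rw [transpose_mul, transpose_transpose, transpose_nonsing_inv, hVW]
  constructor
  · have hXF := intM_eq_intM_mul_transpose_of_conj hK hT.le hS' hX hFtil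
      (by rw [hX0, hFtil0, transpose_mul, Matrix.mul_assoc])
    refine galerkin_intM_error hK hT.le ?_ hAhat hNhat hLhat hFhat hFtil
      (by rw [hFhat0, hFtil0, hX0hat, Matrix.mul_assoc])
      (((isUnit_transpose _).mpr hS).mul hMV)
      (by rw [hV, hXF, Matrix.mul_assoc])
    rw [Matrix.mul_assoc, nonsing_inv_mul _ ((isUnit_iff_isUnit_det _).mp hWV)]
  · rw [lyapAdjM_eq_lyapM_transpose] at hY hGhat hGtil
    simp only [transpose_mul, ← Matrix.mul_assoc] at hY
    have hYG := intM_eq_intM_mul_transpose_of_conj hK hT.le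
      (by rw [← transpose_mul, hS', transpose_one]) hY hGtil
      (by rw [hY0, hGtil0, transpose_transpose, Matrix.mul_assoc])
    have hWG : W = intM Gtil T * (S⁻¹ * MW) := by
      rw [hW, hYG, transpose_transpose, Matrix.mul_assoc]
    rw [kronM_transpose]
    refine galerkin_intM_error hK hT.le (P := Vᵀ) ?_
      (by rw [hAhat, ← hWVt]; simp only [transpose_mul, Matrix.mul_assoc])
      (fun i => by rw [hNhat i, ← hWVt]; simp only [transpose_mul, Matrix.mul_assoc])
      (kronM_transpose Ahat Ahat Nhat Nhat ▸ (isUnit_transpose _).mpr hLhat) hGhat hGtil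
      (by rw [hGhat0, hGtil0, hChat, transpose_mul, Matrix.mul_assoc])
      ((isUnit_nonsing_inv_iff.mpr hS).mul (hMW.mul (isUnit_nonsing_inv_iff.mpr hVWunit)))
      (by nth_rw 1 [hWG]; simp only [Matrix.mul_assoc])
    rw [← Matrix.mul_assoc, mul_nonsing_inv _ ((isUnit_iff_isUnit_det _).mp hVWunit)]
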